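/- arXiv:2012.06742 — 5 statements merged into one kernel-verified Lean document; each statement's English description precedes it below -/
import Mathlib

section
/- Let u : [0,∞) → [0,∞) be concave with u(0) = 0, and fix a constant c ≥ 0. Define f : [0,∞) → ℝ by f(t) = u(t + c)·t/(t + c) for t + c > 0 and f(0) = 0. Then f is concave on [0,∞); and if u is strictly concave, then f is strictly concave on [0,∞). -/
/-!
Put `s = c + t`, so that `f t = (1 - c / s) * u s = u s - c * (u s / s)` on `s ≥ c`. For `Z = a X + b Y`
the concavity defect of this function is `(1 - c / Z)` times the concavity defect of `u`, plus
`c a b (Y - X) (u X / X - u Y / Y) / Z`, which is nonnegative because the slope `u s / s` of a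
concave function with `u 0 = 0` is nonincreasing.
-/

open Set

noncomputable def damped (c : ℝ) (u : ℝ → ℝ) (s : ℝ) : ℝ := (1 - c / s) * u s

variable {u : ℝ → ℝ} {c : ℝ}

@[simp]
theorem damped_zero : damped 0 u = u := by
  ext s; simp [damped]

theorem ConcaveOn.antitoneOn_div_Ioi (hu : ConcaveOn ℝ (Ici 0) u) (hu0 : u 0 = 0) :
    AntitoneOn (fun s => u s / s) (Ioi 0) := by
  intro x hx y hy hxy
  have h := hu.neg.secant_mono self_mem_Ici (mem_Ici.2 hx.le) (mem_Ici.2 hy.le)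
    hx.ne' hy.ne' hxy
  simp only [Pi.neg_apply, hu0, neg_zero, sub_zero, neg_div] at h
  simpa using h

theorem damped_combo_sub {X Y a b : ℝ} (hX : X ≠ 0) (hY : Y ≠ 0) (hZ : a * X + b * Y ≠ 0)
    (hab : a + b = 1) :
    damped c u (a * X + b * Y) - (a * damped c u X + b * damped c u Y) =
      (1 - c / (a * X + b * Y)) * (u (a * X + b * Y) - (a * u X + b * u Y)) +
        c * a * b * ((Y - X) * (u X / X - u Y / Y)) / (a * X + b * Y) := by
  obtain rfl : b = 1 - a := by linarith
  unfold damped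
  field_simp
  ring

theorem ConcaveOn.damped_gap (hu : ConcaveOn ℝ (Ici 0) u) (hu0 : u 0 = 0) (hc : 0 < c)
    {X Y a b : ℝ} (hX : c ≤ X) (hY : c ≤ Y) (ha : 0 ≤ a) (hb : 0 ≤ b) (hab : a + b = 1) :
    (1 - c / (a * X + b * Y)) * (u (a * X + b * Y) - (a * u X + b * u Y)) ≤
      damped c u (a * X + b * Y) - (a * damped c u X + b * damped c u Y) := by
  have hcZ : c ≤ a * X + b * Y := by nlinarith
  have hslope : 0 ≤ (Y - X) * (u X / X - u Y / Y) := by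
    have hanti := hu.antitoneOn_div_Ioi hu0
    rcases le_total X Y with h | h
    · exact mul_nonneg (by linarith) (sub_nonneg.2 (hanti (hc.trans_le hX) (hc.trans_le hY) h))
    · exact mul_nonneg_of_nonpos_of_nonpos (by linarith)
        (sub_nonpos.2 (hanti (hc.trans_le hY) (hc.trans_le hX) h))
  rw [damped_combo_sub (by linarith) (by linarith) (by linarith) hab, le_add_iff_nonneg_right]
  exact div_nonneg (mul_nonneg (by positivity) hslope) (by linarith)

theorem ConcaveOn.damped (hu : ConcaveOn ℝ (Ici 0) u) (hu0 : u 0 = 0) (hc : 0 < c) :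
    ConcaveOn ℝ (Ici c) (damped c u) := by
  refine ⟨convex_Ici c, fun X hX Y hY a b ha hb hab => ?_⟩
  have hcZ : c ≤ a * X + b * Y := by nlinarith [mem_Ici.1 hX, mem_Ici.1 hY]
  have hu_le : a * u X + b * u Y ≤ u (a * X + b * Y) :=
    hu.2 (mem_Ici.2 (hc.le.trans hX)) (mem_Ici.2 (hc.le.trans hY)) ha hb hab
  have hfac : 0 ≤ 1 - c / (a * X + b * Y) := by
    rw [sub_nonneg, div_le_one (hc.trans_le hcZ)]; exact hcZ
  have := hu.damped_gap hu0 hc hX hY ha hb hab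
  simp only [smul_eq_mul]
  linarith [mul_nonneg hfac (sub_nonneg.2 hu_le)]

theorem StrictConcaveOn.damped (hu : StrictConcaveOn ℝ (Ici 0) u) (hu0 : u 0 = 0) (hc : 0 < c) :
    StrictConcaveOn ℝ (Ici c) (damped c u) := by
  refine ⟨convex_Ici c, fun X hX Y hY hXY a b ha hb hab => ?_⟩
  have hcZ : c < a * X + b * Y := by
    rcases lt_or_gt_of_ne hXY with h | h <;> nlinarith [mem_Ici.1 hX, mem_Ici.1 hY]
  have hu_lt : a * u X + b * u Y < u (a * X + b * Y) :=
    hu.2 (mem_Ici.2 (hc.le.trans hX)) (mem_Ici.2 (hc.le.trans hY)) hXY ha hb hab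
  have hfac : 0 < 1 - c / (a * X + b * Y) := by
    rw [sub_pos, div_lt_one (hc.trans hcZ)]; exact hcZ
  have := hu.concaveOn.damped_gap hu0 hc hX hY ha.le hb.le hab
  simp only [smul_eq_mul]
  linarith [mul_pos hfac (sub_pos.2 hu_lt)]

theorem shifted_average_concave_general (u : ℝ → ℝ) (c : ℝ) (hc : 0 ≤ c)
    (hu0 : u 0 = 0)
    (hu_conc : ConcaveOn ℝ (Ici (0:ℝ)) u)
    (f : ℝ → ℝ)
    (hf0 : f 0 = 0)
    (hf : ∀ t ∈ Ici (0:ℝ), 0 < t + c → f t = u (t + c) * t / (t + c)) :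
    ConcaveOn ℝ (Ici (0:ℝ)) f ∧
      (StrictConcaveOn ℝ (Ici (0:ℝ)) u → StrictConcaveOn ℝ (Ici (0:ℝ)) f) := by
  have hf_eq : EqOn (damped c u ∘ fun t => c + t) f (Ici 0) := by
    intro t ht
    rcases (add_nonneg (mem_Ici.1 ht) hc).eq_or_lt with h | h
    · obtain ⟨rfl, rfl⟩ : t = 0 ∧ c = 0 := by constructor <;> linarith [mem_Ici.1 ht]
      simp [hu0, hf0]
    · rw [hf t ht h, Function.comp_apply, damped, add_comm c t]
      field_simp
      ring
  have hpre : (fun t => c + t) ⁻¹' Ici c = Ici 0 := by simp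
  have hdamped : ConcaveOn ℝ (Ici c) (damped c u) ∧
      (StrictConcaveOn ℝ (Ici 0) u → StrictConcaveOn ℝ (Ici c) (damped c u)) := by
    rcases hc.eq_or_lt with rfl | hc
    · simpa using hu_conc
    · exact ⟨hu_conc.damped hu0 hc, fun hs => hs.damped hu0 hc⟩
  exact ⟨(hpre ▸ hdamped.1.translate_right c).congr hf_eq,
    fun hs => (hpre ▸ (hdamped.2 hs).translate_right c).congr hf_eq⟩

/-- If `u : [0,∞) → [0,∞)` is concave with `u 0 = 0` and `c ≥ 0`,
then `f(t) = u(t+c)·t/(t+c)` (with `f 0 = 0`) is concave on `[0,∞)`; and if `u`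
is strictly concave, then `f` is strictly concave on `[0,∞)`. -/
theorem shifted_average_concave (u : ℝ → ℝ) (c : ℝ) (hc : 0 ≤ c)
    (hu0 : u 0 = 0)
    (hu_nonneg : ∀ t ∈ Ici (0:ℝ), 0 ≤ u t)
    (hu_conc : ConcaveOn ℝ (Ici (0:ℝ)) u)
    (f : ℝ → ℝ)
    (hf0 : f 0 = 0)
    (hf : ∀ t ∈ Ici (0:ℝ), 0 < t + c → f t = u (t + c) * t / (t + c)) :
    ConcaveOn ℝ (Ici (0:ℝ)) f ∧
      (StrictConcaveOn ℝ (Ici (0:ℝ)) u → StrictConcaveOn ℝ (Ici (0:ℝ)) f) :=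
  shifted_average_concave_general u c hc hu0 hu_conc f hf0 hf
end

section
/- Under Assumption 1, for every player i and every fixed vector w ∈ (n−1)·Δ of opponents' aggregate allocations, the payoff function v ↦ Σ_x p_x(v_x + w_x)·v_x − c(v) is strictly concave on the simplex Δ. -/
open Set Finset

/-- Payoff of a player with strategy `v` against opponent aggregate `w`:
`Σ_x p_x(v_x + w_x)·v_x − c(v)`, where `p_x(t) = u_x(t)/t` (and `0/0 = 0` in
Lean, matching the convention that `p_x(t)·v` is read as `0` when `t = 0`). -/
noncomputable def pay {m : ℕ} (u : Fin m → ℝ → ℝ) (c : (Fin m → ℝ) → ℝ)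
    (w v : Fin m → ℝ) : ℝ :=
  (∑ x, u x (v x + w x) / (v x + w x) * v x) - c v

/-- A pure-strategy Nash equilibrium of the game `G`: every strategy lies in
the simplex, and each player's strategy maximizes her payoff against the
aggregate strategy of her opponents. -/
def IsNE {n m : ℕ} (u : Fin m → ℝ → ℝ) (c : (Fin m → ℝ) → ℝ)
    (S : Fin n → Fin m → ℝ) : Prop :=
  (∀ i, S i ∈ stdSimplex ℝ (Fin m)) ∧
  ∀ i, ∀ v ∈ stdSimplex ℝ (Fin m),
    pay u c (fun x => (∑ j, S j x) - S i x) v ≤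
      pay u c (fun x => (∑ j, S j x) - S i x) (S i)

/-- Assumption 1: every `u_x` is concave and differentiable on `[0,∞)` with
`u_x(0) = 0` and nonnegative values, `c` is convex and differentiable on the
simplex with nonnegative values, and either all but at most one of the `u_x`
are strictly concave, or `c` is strictly convex. -/
structure Assumption1 {m : ℕ} (u : Fin m → ℝ → ℝ) (c : (Fin m → ℝ) → ℝ) : Prop where
  u_zero : ∀ x, u x 0 = 0
  u_nonneg : ∀ x, ∀ t ∈ Ici (0:ℝ), 0 ≤ u x t
  u_concave : ∀ x, ConcaveOn ℝ (Ici (0:ℝ)) (u x)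
  u_diff : ∀ x, DifferentiableOn ℝ (u x) (Ici (0:ℝ))
  c_nonneg : ∀ v ∈ stdSimplex ℝ (Fin m), 0 ≤ c v
  c_convex : ConvexOn ℝ (stdSimplex ℝ (Fin m)) c
  c_diff : DifferentiableOn ℝ c (stdSimplex ℝ (Fin m))
  strict : (∃ x₀, ∀ x, x ≠ x₀ → StrictConcaveOn ℝ (Ici (0:ℝ)) (u x)) ∨
    StrictConvexOn ℝ (stdSimplex ℝ (Fin m)) c

/-- The simplex dilated by the factor `r`: `{s : s_x ≥ 0, Σ_x s_x = r}`. -/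
def dilSimplex (m : ℕ) (r : ℝ) : Set (Fin m → ℝ) :=
  {s | (∀ x, 0 ≤ s x) ∧ ∑ x, s x = r}

/-- The potential function
`Φ(s) = Σ_x [(1 − 1/n)·∫_0^{s_x} u_x(t)/t dt + (1/n)·u_x(s_x)] − n·c(s/n)`. -/
noncomputable def potential (n : ℕ) {m : ℕ} (u : Fin m → ℝ → ℝ)
    (c : (Fin m → ℝ) → ℝ) (s : Fin m → ℝ) : ℝ :=
  (∑ x, ((1 - 1/(n:ℝ)) * ∫ t in (0:ℝ)..(s x), u x t / t
    + (1/(n:ℝ)) * u x (s x))) - n * c (fun x => s x / n)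

/-!
For each market the revenue `a ↦ p(a + w) · a` is concave on `[0, ∞)`: after clearing the
denominator `l a + μ b + w`, concavity of `u` at `a + w` and `b + w` leaves the correction term
`w l μ (b - a) (p(a + w) - p(b + w))`, which is nonnegative because `p(t) = u(t) / t` is antitone
(Chebyshev). Summing over markets and subtracting the convex cost gives concavity of the payoff.
Strictness comes either from `c`, or from a market `x ≠ x₀`, where `u_x` is strictly concave, in
which two distinct points of the simplex differ: two points of the simplex that agree off `x₀`
agree at `x₀` as well.
-/

/-- `p(a + w) · a` with `p(t) = f t / t`: the revenue of placing `a` in a market with production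
function `f` where the opponents place `w`. -/
noncomputable def revenue (f : ℝ → ℝ) (w a : ℝ) : ℝ := f (a + w) / (a + w) * a

section Revenue

variable {f : ℝ → ℝ}

theorem ConcaveOn.antitoneOn_div (hf : ConcaveOn ℝ (Ici 0) f) (hf0 : f 0 = 0) :
    AntitoneOn (fun t => f t / t) (Ioi 0) := by
  intro s hs t ht hst
  have h := hf.neg.secant_mono self_mem_Ici (Ioi_subset_Ici_self hs) (Ioi_subset_Ici_self ht)
    (ne_of_gt hs) (ne_of_gt ht) hst
  simp only [Pi.neg_apply, hf0, neg_zero, sub_zero, neg_div] at h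
  exact neg_le_neg_iff.1 h

theorem revenue_zero_eqOn (hf0 : f 0 = 0) : EqOn f (revenue f 0) (Ici 0) := by
  intro a ha
  rcases (mem_Ici.1 ha).eq_or_lt with rfl | ha
  · simp [revenue, hf0]
  · simp [revenue, ha.ne']

theorem mix_revenue_le (hf : ConcaveOn ℝ (Ici 0) f) (hf0 : f 0 = 0) {w a b l μ : ℝ} (hw : 0 < w)
    (ha : 0 ≤ a) (hb : 0 ≤ b) (hl : 0 ≤ l) (hμ : 0 ≤ μ) (hlμ : l + μ = 1) :
    l * revenue f w a + μ * revenue f w b ≤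
      (l * f (a + w) + μ * f (b + w)) / (l * a + μ * b + w) * (l * a + μ * b) := by
  have hA : 0 < a + w := by linarith
  have hB : 0 < b + w := by linarith
  obtain ⟨p, hp⟩ : ∃ p, f (a + w) / (a + w) = p := ⟨_, rfl⟩
  obtain ⟨q, hq⟩ : ∃ q, f (b + w) / (b + w) = q := ⟨_, rfl⟩
  have hcheb : 0 ≤ (b - a) * (p - q) := by
    have anti := hf.antitoneOn_div hf0
    rcases le_total a b with hab | hab
    · have hqp : q ≤ p := hp ▸ hq ▸ anti hA hB (by linarith)
      exact mul_nonneg (by linarith) (by linarith)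
    · have hpq : p ≤ q := hp ▸ hq ▸ anti hB hA (by linarith)
      exact mul_nonneg_of_nonpos_of_nonpos (by linarith) (by linarith)
  have hfA : f (a + w) = p * (a + w) := by rw [← hp, div_mul_cancel₀ _ hA.ne']
  have hfB : f (b + w) = q * (b + w) := by rw [← hq, div_mul_cancel₀ _ hB.ne']
  simp only [revenue, hp, hq]
  rw [div_mul_eq_mul_div, le_div_iff₀ (by linarith [mul_nonneg hl ha, mul_nonneg hμ hb]), hfA, hfB]
  linear_combination (w * l * μ) * hcheb - (w * (l * p * a + μ * q * b)) * hlμ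

theorem ConcaveOn.revenue (hf : ConcaveOn ℝ (Ici 0) f) (hf0 : f 0 = 0) {w : ℝ} (hw : 0 ≤ w) :
    ConcaveOn ℝ (Ici 0) (revenue f w) := by
  rcases hw.eq_or_lt with rfl | hw
  · exact hf.congr (revenue_zero_eqOn hf0)
  refine ⟨convex_Ici 0, fun a (ha : 0 ≤ a) b (hb : 0 ≤ b) l μ hl hμ hlμ => ?_⟩
  have hmix : l * (a + w) + μ * (b + w) = l * a + μ * b + w := by linear_combination w * hlμ
  have hconc := hf.2 (show 0 ≤ a + w by linarith) (show 0 ≤ b + w by linarith) hl hμ hlμ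
  simp only [smul_eq_mul, hmix] at hconc ⊢
  calc l * _root_.revenue f w a + μ * _root_.revenue f w b
      ≤ (l * f (a + w) + μ * f (b + w)) / (l * a + μ * b + w) * (l * a + μ * b) :=
        mix_revenue_le hf hf0 hw ha hb hl hμ hlμ
    _ ≤ _root_.revenue f w (l * a + μ * b) := by
        unfold _root_.revenue
        gcongr

theorem StrictConcaveOn.revenue (hf : StrictConcaveOn ℝ (Ici 0) f) (hf0 : f 0 = 0) {w : ℝ}
    (hw : 0 ≤ w) : StrictConcaveOn ℝ (Ici 0) (revenue f w) := by
  rcases hw.eq_or_lt with rfl | hw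
  · exact hf.congr (revenue_zero_eqOn hf0)
  refine ⟨convex_Ici 0, fun a (ha : 0 ≤ a) b (hb : 0 ≤ b) hab l μ hl hμ hlμ => ?_⟩
  have hmix : l * (a + w) + μ * (b + w) = l * a + μ * b + w := by linear_combination w * hlμ
  have hconc := hf.2 (show 0 ≤ a + w by linarith) (show 0 ≤ b + w by linarith)
    (by simpa using hab) hl hμ hlμ
  simp only [smul_eq_mul, hmix] at hconc ⊢
  calc l * _root_.revenue f w a + μ * _root_.revenue f w b
      ≤ (l * f (a + w) + μ * f (b + w)) / (l * a + μ * b + w) * (l * a + μ * b) :=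
        mix_revenue_le hf.concaveOn hf0 hw ha hb hl.le hμ.le hlμ
    _ < _root_.revenue f w (l * a + μ * b) := by
        unfold _root_.revenue
        have : 0 < l * a + μ * b := by
          rcases hab.lt_or_gt with h | h <;> nlinarith [mul_nonneg hl.le ha, mul_nonneg hμ.le hb]
        gcongr

end Revenue

section SeparableSum

variable {ι : Type*} [Fintype ι] {s : Set (ι → ℝ)} {t : Set ℝ} {g : ι → ℝ → ℝ}

theorem concaveOn_sum_apply (hs : Convex ℝ s) (hst : ∀ v ∈ s, ∀ x, v x ∈ t)
    (hg : ∀ x, ConcaveOn ℝ t (g x)) : ConcaveOn ℝ s (fun v => ∑ x, g x (v x)) := by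
  refine ⟨hs, fun v hv v' hv' l μ hl hμ hlμ => ?_⟩
  simp only [smul_eq_mul, Pi.add_apply, Pi.smul_apply, mul_sum, ← sum_add_distrib]
  exact sum_le_sum fun x _ => (hg x).2 (hst v hv x) (hst v' hv' x) hl hμ hlμ

theorem strictConcaveOn_sum_apply (hs : Convex ℝ s) (hst : ∀ v ∈ s, ∀ x, v x ∈ t)
    (hg : ∀ x, ConcaveOn ℝ t (g x))
    (hstrict : ∀ v ∈ s, ∀ v' ∈ s, v ≠ v' → ∃ x, v x ≠ v' x ∧ StrictConcaveOn ℝ t (g x)) :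
    StrictConcaveOn ℝ s (fun v => ∑ x, g x (v x)) := by
  refine ⟨hs, fun v hv v' hv' hne l μ hl hμ hlμ => ?_⟩
  obtain ⟨x₁, hx₁, hg₁⟩ := hstrict v hv v' hv' hne
  simp only [smul_eq_mul, Pi.add_apply, Pi.smul_apply, mul_sum, ← sum_add_distrib]
  exact sum_lt_sum (fun x _ => (hg x).2 (hst v hv x) (hst v' hv' x) hl.le hμ.le hlμ)
    ⟨x₁, mem_univ _, hg₁.2 (hst v hv x₁) (hst v' hv' x₁) hx₁ hl hμ hlμ⟩

end SeparableSum

theorem exists_ne_apply_ne_of_sum_eq {ι : Type*} [Fintype ι] {v v' : ι → ℝ}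
    (hsum : ∑ x, v x = ∑ x, v' x) (hne : v ≠ v') (x₀ : ι) : ∃ x ≠ x₀, v x ≠ v' x := by
  by_contra! h
  refine hne (funext fun x => ?_)
  rcases eq_or_ne x x₀ with rfl | hx
  · have hsingle : ∑ y, (v y - v' y) = v x - v' x :=
      Fintype.sum_eq_single x fun y hy => sub_eq_zero.2 (h y hy)
    rw [sum_sub_distrib, hsum, sub_self] at hsingle
    linarith
  · exact h x hx

theorem payoff_strictConcaveOn_general (n m : ℕ)
    (u : Fin m → ℝ → ℝ) (c : (Fin m → ℝ) → ℝ)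
    (h1 : Assumption1 u c)
    (w : Fin m → ℝ) (hw : w ∈ dilSimplex m ((n:ℝ) - 1)) :
    StrictConcaveOn ℝ (stdSimplex ℝ (Fin m)) (fun v => pay u c w v) := by
  have hΔ : ∀ v ∈ stdSimplex ℝ (Fin m), ∀ x, v x ∈ Set.Ici 0 := fun v hv => hv.1
  have hrev : ∀ x, ConcaveOn ℝ (Ici 0) (revenue (u x) (w x)) :=
    fun x => (h1.u_concave x).revenue (h1.u_zero x) (hw.1 x)
  rcases h1.strict with ⟨x₀, hstrict⟩ | hc
  · refine StrictConcaveOn.sub_convexOn ?_ h1.c_convex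
    refine strictConcaveOn_sum_apply (convex_stdSimplex ℝ _) hΔ hrev fun v hv v' hv' hne => ?_
    obtain ⟨x, hx, hvx⟩ := exists_ne_apply_ne_of_sum_eq (hv.2.trans hv'.2.symm) hne x₀
    exact ⟨x, hvx, (hstrict x hx).revenue (h1.u_zero x) (hw.1 x)⟩
  · exact (concaveOn_sum_apply (convex_stdSimplex ℝ _) hΔ hrev).sub_strictConvexOn hc

/-- Under Assumption 1, for any fixed opponent aggregate
`w ∈ (n−1)·Δ`, the payoff `v ↦ Σ_x p_x(v_x + w_x)·v_x − c(v)` is strictly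
concave on the simplex `Δ`. -/
theorem payoff_strictConcaveOn (n m : ℕ) (hn : 2 ≤ n) (hm : 2 ≤ m)
    (u : Fin m → ℝ → ℝ) (c : (Fin m → ℝ) → ℝ)
    (h1 : Assumption1 u c)
    (w : Fin m → ℝ) (hw : w ∈ dilSimplex m ((n:ℝ) - 1)) :
    StrictConcaveOn ℝ (stdSimplex ℝ (Fin m)) (fun v => pay u c w v) :=
  payoff_strictConcaveOn_general n m u c h1 w hw
end

section
/- Under Assumption 1, every pure-strategy Nash equilibrium of the game G is symmetric: if S* = (s_1*, …, s_n*) is a Nash equilibrium, then s_i* = s_j* for all players i and j. -/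
open Set Finset

/-!
Suppose firms `i` and `j` play different strategies `a ≠ b` in an equilibrium, and let each move
the fraction `l` of the way towards the other's strategy. In a market with aggregate `s` and unit
price `p(t) = u(t)/t`, their joint revenue grows at rate `-p'(s) (b - a)² ≥ 0`, since concavity
and `u(0) = 0` make `p` nonincreasing; by convexity, their joint cost falls at rate at least
`2 (c(a) + c(b) - 2 c((a + b)/2)) ≥ 0`. Neither deviation is profitable, so both rates vanish,
while either strictness assumption makes one of them positive.
-/

lemma HasDerivAt.le_of_sub_le_mul {f : ℝ → ℝ} {f' a B ε : ℝ} (hf : HasDerivAt f f' a)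
    (hε : 0 < ε) (h : ∀ l ∈ Ioo 0 ε, f (a + l) - f a ≤ l * B) : f' ≤ B := by
  refine le_of_tendsto hf.tendsto_slope_zero_right ?_
  filter_upwards [Ioo_mem_nhdsGT hε] with l hl
  rw [smul_eq_mul, inv_mul_le_iff₀ hl.1]
  exact h l hl

lemma ConcaveOn.deriv_mul_le {u : ℝ → ℝ} {s : ℝ} (hu : ConcaveOn ℝ (Ici 0) u) (hs : 0 < s)
    (hd : DifferentiableAt ℝ u s) : deriv u s * s ≤ u s - u 0 := by
  have := hu.deriv_le_slope self_mem_Ici hs.le hs hd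
  rwa [slope_def_field, sub_zero, le_div_iff₀ hs] at this

lemma StrictConcaveOn.deriv_mul_lt {u : ℝ → ℝ} {s : ℝ} (hu : StrictConcaveOn ℝ (Ici 0) u)
    (hs : 0 < s) (hd : DifferentiableAt ℝ u s) : deriv u s * s < u s - u 0 := by
  have := hu.deriv_lt_slope self_mem_Ici hs.le hs hd
  rwa [slope_def_field, sub_zero, lt_div_iff₀ hs] at this

/-- `-(d/dt) (u t / t)` at `t = s`; it is `0` at `s = 0` by the convention `x / 0 = 0`. -/
noncomputable def priceDecay (u : ℝ → ℝ) (s : ℝ) : ℝ := (u s - deriv u s * s) / s ^ 2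

lemma priceDecay_nonneg {u : ℝ → ℝ} {s : ℝ} (hu : ConcaveOn ℝ (Ici 0) u)
    (hd : DifferentiableOn ℝ u (Ici 0)) (h0 : u 0 = 0) (hs : 0 ≤ s) : 0 ≤ priceDecay u s := by
  rcases hs.eq_or_lt with rfl | hs
  · simp [priceDecay]
  have := hu.deriv_mul_le hs ((hd s hs.le).differentiableAt (Ici_mem_nhds hs))
  exact div_nonneg (by linarith) (sq_nonneg s)

lemma priceDecay_pos {u : ℝ → ℝ} {s : ℝ} (hu : StrictConcaveOn ℝ (Ici 0) u)
    (hd : DifferentiableOn ℝ u (Ici 0)) (h0 : u 0 = 0) (hs : 0 < s) : 0 < priceDecay u s := by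
  have := hu.deriv_mul_lt hs ((hd s hs.le).differentiableAt (Ici_mem_nhds hs))
  exact div_pos (by linarith) (by positivity)

lemma ConvexOn.add_at_symmetric_points_le {E : Type*} [AddCommGroup E] [Module ℝ E] {K : Set E}
    {c : E → ℝ} (hc : ConvexOn ℝ K c) {a b : E} (ha : a ∈ K) (hb : b ∈ K) {l : ℝ}
    (hl₀ : 0 ≤ l) (hl : l ≤ 1 / 2) :
    c (a + l • (b - a)) + c (b + l • (a - b)) ≤
      c a + c b + l * (2 * (2 * c ((1 / 2 : ℝ) • a + (1 / 2 : ℝ) • b) - c a - c b)) := by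
  have hmid : (1 / 2 : ℝ) • a + (1 / 2 : ℝ) • b ∈ K :=
    hc.1 ha hb (by norm_num) (by norm_num) (by norm_num)
  have hca := hc.2 ha hmid (by linarith : 0 ≤ 1 - 2 * l) (by linarith : 0 ≤ 2 * l) (by ring)
  have hcb := hc.2 hb hmid (by linarith : 0 ≤ 1 - 2 * l) (by linarith : 0 ≤ 2 * l) (by ring)
  rw [show (1 - 2 * l) • a + (2 * l) • ((1 / 2 : ℝ) • a + (1 / 2 : ℝ) • b) = a + l • (b - a) by
    module] at hca
  rw [show (1 - 2 * l) • b + (2 * l) • ((1 / 2 : ℝ) • a + (1 / 2 : ℝ) • b) = b + l • (a - b) by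
    module] at hcb
  simp only [smul_eq_mul] at hca hcb
  linarith

lemma exists_ne_and_ne_zero_of_sum_eq_zero {ι : Type*} [Fintype ι] {f : ι → ℝ} (hf : f ≠ 0)
    (hsum : ∑ x, f x = 0) (x₀ : ι) : ∃ x, x ≠ x₀ ∧ f x ≠ 0 := by
  by_contra! h
  refine hf (funext fun x => ?_)
  obtain rfl | hx := eq_or_ne x x₀
  · rwa [Finset.sum_eq_single_of_mem x (mem_univ x) fun y _ hy => h y hy] at hsum
  · exact h x hx

lemma hasDerivAt_revenue {u : ℝ → ℝ} {u' s a d : ℝ} (hs : s ≠ 0) (hu : HasDerivAt u u' s) :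
    HasDerivAt (fun l => u (s + l * d) / (s + l * d) * (a + l * d))
      (((u' * s - u s) / s ^ 2 * a + u s / s) * d) 0 := by
  have hline : ∀ b : ℝ, HasDerivAt (fun l : ℝ => b + l * d) d 0 := fun b => by
    simpa using ((hasDerivAt_id (0 : ℝ)).mul_const d).const_add b
  have hu₀ : HasDerivAt u u' (s + 0 * d) := by simpa using hu
  refine (((hu₀.comp 0 (hline s)).fun_div (hline s) (by simpa using hs)).fun_mul
    (hline a)).congr_deriv ?_
  simp only [Function.comp_def, zero_mul, add_zero]
  field_simp

/-- Joint revenue, in a market of total volume `s`, of two firms holding `a` and `b` after each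
has moved the fraction `l` of the way towards the other's holding. -/
noncomputable def pairRevenue (u : ℝ → ℝ) (s a b l : ℝ) : ℝ :=
  u (s + l * (b - a)) / (s + l * (b - a)) * (a + l * (b - a)) +
    u (s + l * (a - b)) / (s + l * (a - b)) * (b + l * (a - b))

lemma hasDerivAt_pairRevenue {u : ℝ → ℝ} {s a b : ℝ} (hu : DifferentiableOn ℝ u (Ici 0))
    (hs : 0 ≤ s) (hab : s = 0 → a = b) :
    HasDerivAt (pairRevenue u s a b) (priceDecay u s * (b - a) ^ 2) 0 := by
  rcases hs.eq_or_lt with rfl | hs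
  · obtain rfl := hab rfl
    have hconst : pairRevenue u 0 a a = fun _ => 0 := by funext l; simp [pairRevenue]
    simpa [hconst] using hasDerivAt_const (0 : ℝ) (0 : ℝ)
  have hd : HasDerivAt u (deriv u s) s :=
    ((hu s hs.le).differentiableAt (Ici_mem_nhds hs)).hasDerivAt
  refine ((hasDerivAt_revenue (a := a) (d := b - a) hs.ne' hd).fun_add
    (hasDerivAt_revenue (a := b) (d := a - b) hs.ne' hd)).congr_deriv ?_
  rw [priceDecay]
  ring

lemma pay_add_pay_eq_sum_pairRevenue {m : ℕ} (u : Fin m → ℝ → ℝ) (c : (Fin m → ℝ) → ℝ)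
    (s a b : Fin m → ℝ) (l : ℝ) :
    pay u c (fun x => s x - a x) (a + l • (b - a)) +
        pay u c (fun x => s x - b x) (b + l • (a - b)) =
      ∑ x, pairRevenue (u x) (s x) (a x) (b x) l - (c (a + l • (b - a)) + c (b + l • (a - b))) := by
  have hsum : ∀ x, ∀ d : ℝ, a x + d + (s x - a x) = s x + d := fun x d => by ring
  have hsum' : ∀ x, ∀ d : ℝ, b x + d + (s x - b x) = s x + d := fun x d => by ring
  simp only [pay, pairRevenue, Pi.add_apply, Pi.smul_apply, Pi.sub_apply, smul_eq_mul, hsum,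
    hsum', sum_add_distrib]
  ring

section Equilibrium

variable {n m : ℕ} {u : Fin m → ℝ → ℝ} {c : (Fin m → ℝ) → ℝ} {S : Fin n → Fin m → ℝ}

lemma IsNE.le_sum (hS : IsNE u c S) (k : Fin n) (x : Fin m) : S k x ≤ ∑ k', S k' x :=
  single_le_sum (f := fun k' => S k' x) (fun k' _ => (hS.1 k').1 x) (Finset.mem_univ k)

lemma IsNE.sum_nonneg (hS : IsNE u c S) (x : Fin m) : 0 ≤ ∑ k, S k x :=
  Finset.sum_nonneg fun k _ => (hS.1 k).1 x

lemma IsNE.sum_pairRevenue_sub_le (hS : IsNE u c S) (i j : Fin n) {l : ℝ}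
    (hl : l ∈ Set.Icc (0 : ℝ) 1) :
    ∑ x, pairRevenue (u x) (∑ k, S k x) (S i x) (S j x) l
        - ∑ x, pairRevenue (u x) (∑ k, S k x) (S i x) (S j x) 0
      ≤ c (S i + l • (S j - S i)) + c (S j + l • (S i - S j)) - c (S i) - c (S j) := by
  have hdev : ∀ k k' : Fin n, S k + l • (S k' - S k) ∈ stdSimplex ℝ (Fin m) := fun k k' => by
    convert convex_stdSimplex ℝ (Fin m) (hS.1 k) (hS.1 k') (sub_nonneg.2 hl.2) hl.1 (by ring)
      using 1
    module
  have hi := hS.2 i _ (hdev i j)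
  have hj := hS.2 j _ (hdev j i)
  have hl' := pay_add_pay_eq_sum_pairRevenue u c (fun x => ∑ k, S k x) (S i) (S j) l
  have h0 := pay_add_pay_eq_sum_pairRevenue u c (fun x => ∑ k, S k x) (S i) (S j) 0
  simp only [zero_smul, add_zero] at h0
  linarith

lemma IsNE.sum_priceDecay_mul_sq_le (hS : IsNE u c S)
    (hu : ∀ x, DifferentiableOn ℝ (u x) (Ici 0)) (hc : ConvexOn ℝ (stdSimplex ℝ (Fin m)) c)
    (i j : Fin n) :
    ∑ x, priceDecay (u x) (∑ k, S k x) * (S j x - S i x) ^ 2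
      ≤ 2 * (2 * c ((1 / 2 : ℝ) • S i + (1 / 2 : ℝ) • S j) - c (S i) - c (S j)) := by
  have hderiv := HasDerivAt.fun_sum (u := univ) fun x _ =>
    hasDerivAt_pairRevenue (a := S i x) (b := S j x) (hu x)
      (hS.sum_nonneg x) fun hs0 => by
        linarith [hS.le_sum i x, hS.le_sum j x, (hS.1 i).1 x, (hS.1 j).1 x]
  refine hderiv.le_of_sub_le_mul (by norm_num : (0 : ℝ) < 1 / 2) fun l hl => ?_
  rw [zero_add]
  linarith [hS.sum_pairRevenue_sub_le i j ⟨hl.1.le, by linarith [hl.2]⟩,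
    hc.add_at_symmetric_points_le (hS.1 i) (hS.1 j) hl.1.le hl.2.le]

end Equilibrium

theorem NE_symmetric_general (n m : ℕ)
    (u : Fin m → ℝ → ℝ) (c : (Fin m → ℝ) → ℝ)
    (h1 : Assumption1 u c)
    (S : Fin n → Fin m → ℝ) (hS : IsNE u c S) :
    ∀ i j, S i = S j := by
  intro i j
  by_contra hne
  have hfoc := hS.sum_priceDecay_mul_sq_le h1.u_diff h1.c_convex i j
  have hterm : ∀ x, 0 ≤ priceDecay (u x) (∑ k, S k x) * (S j x - S i x) ^ 2 := fun x =>
    mul_nonneg (priceDecay_nonneg (h1.u_concave x) (h1.u_diff x) (h1.u_zero x)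
      (hS.sum_nonneg x)) (sq_nonneg _)
  rcases h1.strict with ⟨x₀, hstrict⟩ | hc
  · obtain ⟨x, hx₀, hx⟩ := exists_ne_and_ne_zero_of_sum_eq_zero (sub_ne_zero.2 (Ne.symm hne))
      (by simp [sum_sub_distrib, (hS.1 i).2, (hS.1 j).2]) x₀
    rw [Pi.sub_apply] at hx
    have hs : 0 < ∑ k, S k x := (hS.sum_nonneg x).lt_of_ne fun hs0 => hx <| by
      linarith [hS.le_sum i x, hS.le_sum j x, (hS.1 i).1 x, (hS.1 j).1 x]
    have hmid := h1.c_convex.2 (hS.1 i) (hS.1 j) (by norm_num : (0 : ℝ) ≤ 1 / 2)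
      (by norm_num : (0 : ℝ) ≤ 1 / 2) (by norm_num)
    simp only [smul_eq_mul] at hmid
    linarith [single_le_sum (fun x _ => hterm x) (Finset.mem_univ x), mul_pos
      (priceDecay_pos (hstrict x hx₀) (h1.u_diff x) (h1.u_zero x) hs) (sq_pos_of_ne_zero hx)]
  · have hmid := hc.2 (hS.1 i) (hS.1 j) hne (by norm_num : (0 : ℝ) < 1 / 2)
      (by norm_num : (0 : ℝ) < 1 / 2) (by norm_num)
    simp only [smul_eq_mul] at hmid
    linarith [Finset.sum_nonneg fun x (_ : x ∈ Finset.univ) => hterm x]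

/-- Under Assumption 1, every pure-strategy Nash equilibrium of
the game `G` is symmetric: all players play the same strategy. -/
theorem NE_symmetric (n m : ℕ) (hn : 2 ≤ n) (hm : 2 ≤ m)
    (u : Fin m → ℝ → ℝ) (c : (Fin m → ℝ) → ℝ)
    (h1 : Assumption1 u c)
    (S : Fin n → Fin m → ℝ) (hS : IsNE u c S) :
    ∀ i j, S i = S j :=
  NE_symmetric_general n m u c h1 S hS
end

section
/- Under Assumptions 1 and 2, let S ∈ Δ^n be a profile whose aggregate s = Σ_i s_i has all coordinates positive, and let g_{ix} = p_x(s_x) + p_x'(s_x)·s_{ix} − (A s_i)_x. Then Σ_i Σ_x (s_{ix} − s_x/n)·( g_{ix} − (1/m)·Σ_y g_{iy} ) = Σ_x p_x'(s_x)·(Σ_i s_{ix}² − s_x²/n) − Σ_i (s_i − s/n)ᵀ A (s_i − s/n) ≤ 0. Equality holds whenever s_i = s/n for all i; and if A is positive definite, equality holds only if s_i = s/n for all i. -/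
open Set Finset

/-!
The deviations `d_i = s_i − s/n` sum to zero over players and, since every `s_i` has mass one,
also over markets. Hence the average `(1/m)·Σ_y g_{iy}` and every part of `g_{ix}` that does not
depend on `i` (namely `p_x(s_x)` and `(A s/n)_x`) drop out, leaving
`Σ_x p_x'(s_x)·Σ_i d_{ix} s_{ix} − Σ_i d_iᵀ A d_i`. Here `Σ_i d_{ix} s_{ix}` is a variance and
`p_x' ≤ 0` because `u_x(0) = 0` and concavity make `p_x` nonincreasing, while the quadratic form
is nonnegative, and for positive definite `A` vanishes only at `d_i = 0`.
-/

open Topology Matrix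

theorem ConcaveOn.antitoneOn_div_self {f : ℝ → ℝ} (hf : ConcaveOn ℝ (Ici 0) f) (h0 : f 0 = 0) :
    AntitoneOn (fun t => f t / t) (Ioi 0) := by
  intro x hx y hy hxy
  have h := hf.neg.secant_mono self_mem_Ici (mem_Ici.2 (le_of_lt hx)) (mem_Ici.2 (le_of_lt hy))
    (ne_of_gt hx) (ne_of_gt hy) hxy
  simp only [Pi.neg_apply, h0, neg_zero, sub_zero, neg_div] at h
  exact neg_le_neg_iff.1 h

theorem HasDerivAt.nonpos_of_antitoneOn_of_mem_nhds {g : ℝ → ℝ} {g' x : ℝ} {s : Set ℝ}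
    (hd : HasDerivAt g g' x) (hg : AntitoneOn g s) (hs : s ∈ 𝓝 x) : g' ≤ 0 :=
  hd.hasDerivWithinAt.nonpos_of_antitoneOn
    (by simpa using (PerfectSpace.univ_preperfect x (mem_univ x)).nhds_inter hs) hg

theorem Matrix.PosDef.eq_zero_of_dotProduct_mulVec_self_eq_zero {κ : Type*} [Fintype κ]
    {A : Matrix κ κ ℝ} (hA : A.PosDef) {v : κ → ℝ} (hv : v ⬝ᵥ (A *ᵥ v) = 0) : v = 0 := by
  by_contra hne
  simpa [hv] using hA.dotProduct_mulVec_pos hne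

section Centering

variable {ι κ : Type*} [Fintype ι]

theorem sq_sum_div_card_le_sum_sq (f : ι → ℝ) :
    (∑ i, f i) ^ 2 / Fintype.card ι ≤ ∑ i, f i ^ 2 :=
  div_le_of_le_mul₀ (Nat.cast_nonneg _) (sum_nonneg fun i _ => sq_nonneg (f i))
    (by rw [mul_comm]; exact sq_sum_le_card_mul_sum_sq)

theorem sum_sub_sum_div_card_eq_zero (f : ι → ℝ) :
    ∑ i, (f i - (∑ j, f j) / Fintype.card ι) = 0 := by
  rcases isEmpty_or_nonempty ι with hι | hι
  · simp
  · rw [sum_sub_distrib, sum_const, card_univ, nsmul_eq_mul,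
      mul_div_cancel₀ _ (Nat.cast_ne_zero.2 Fintype.card_ne_zero), sub_self]

theorem sum_mul_sub_const_of_sum_eq_zero [Fintype κ] {d : κ → ℝ} (hd : ∑ x, d x = 0)
    (g : κ → ℝ) (c : ℝ) :
    ∑ x, d x * (g x - c) = ∑ x, d x * g x := by
  simp only [mul_sub, sum_sub_distrib, ← sum_mul, hd, zero_mul, sub_zero]

theorem sum_sum_mul_eq_zero_of_sum_eq_zero [Fintype κ] {d : ι → κ → ℝ} (hd : ∀ x, ∑ i, d i x = 0)
    (h : κ → ℝ) : ∑ i, ∑ x, d i x * h x = 0 := by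
  rw [sum_comm]
  simp only [← sum_mul, hd, zero_mul, sum_const_zero]

variable {S : ι → κ → ℝ} {s : κ → ℝ}

theorem sum_sub_div_card_mul_self (hs : ∀ x, s x = ∑ i, S i x) (x : κ) :
    ∑ i, (S i x - s x / Fintype.card ι) * S i x = ∑ i, S i x ^ 2 - s x ^ 2 / Fintype.card ι := by
  simp only [sub_mul, sum_sub_distrib, ← mul_sum, ← hs x]
  ring_nf

theorem sum_sub_div_card_eq_zero_of_sum_eq_one [Fintype κ] (hs : ∀ x, s x = ∑ i, S i x)
    (hS : ∀ i, ∑ x, S i x = 1) (i : ι) : ∑ x, (S i x - s x / Fintype.card ι) = 0 := by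
  have : Nonempty ι := ⟨i⟩
  have hmass : ∑ x, s x = Fintype.card ι := by
    simp only [hs]
    rw [sum_comm]
    simp [hS]
  rw [sum_sub_distrib, hS i, ← sum_div, hmass,
    div_self (Nat.cast_ne_zero.2 Fintype.card_ne_zero), sub_self]

theorem sum_sum_sub_div_card_mul_sub_eq [Fintype κ] (hs : ∀ x, s x = ∑ i, S i x)
    (hS : ∀ i, ∑ x, S i x = 1) (A : Matrix κ κ ℝ) (a b : κ → ℝ) {g : ι → κ → ℝ}
    (hg : ∀ i x, g i x = a x + b x * S i x - (A *ᵥ S i) x) (c : ι → ℝ) :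
    ∑ i, ∑ x, (S i x - s x / Fintype.card ι) * (g i x - c i) =
      ∑ x, b x * (∑ i, S i x ^ 2 - s x ^ 2 / Fintype.card ι)
        - ∑ i, (fun y => S i y - s y / Fintype.card ι) ⬝ᵥ
            (A *ᵥ fun y => S i y - s y / Fintype.card ι) := by
  set d : ι → κ → ℝ := fun i y => S i y - s y / Fintype.card ι
  have hsplit : ∀ i, A *ᵥ S i = A *ᵥ d i + A *ᵥ fun y => s y / Fintype.card ι := by
    intro i
    rw [← mulVec_add]
    congr 1
    ext y
    simp [d]
  have hcol : ∀ x, ∑ i, d i x = 0 := fun x => by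
    simpa only [d, hs x] using sum_sub_sum_div_card_eq_zero (S · x)
  calc ∑ i, ∑ x, d i x * (g i x - c i)
      = ∑ i, ∑ x, d i x * g i x :=
        sum_congr rfl fun i _ =>
          sum_mul_sub_const_of_sum_eq_zero (sum_sub_div_card_eq_zero_of_sum_eq_one hs hS i) _ _
    _ = ∑ i, ∑ x, d i x * (a x - (A *ᵥ fun y => s y / Fintype.card ι) x)
          + ∑ x, b x * ∑ i, d i x * S i x - ∑ i, d i ⬝ᵥ (A *ᵥ d i) := by
        simp only [mul_sum, dotProduct]
        rw [sum_comm (f := fun x i => b x * (d i x * S i x)), ← sum_add_distrib,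
          ← sum_sub_distrib]
        refine sum_congr rfl fun i _ => ?_
        rw [← sum_add_distrib, ← sum_sub_distrib]
        refine sum_congr rfl fun x _ => ?_
        rw [hg, hsplit, Pi.add_apply]
        ring
    _ = _ := by
        rw [sum_sum_mul_eq_zero_of_sum_eq_zero hcol, zero_add]
        simp only [d, sum_sub_div_card_mul_self hs]

end Centering

theorem regularizer_derivative_nonpos_general (n m : ℕ)
    (u p' : Fin m → ℝ → ℝ)
    (A : Matrix (Fin m) (Fin m) ℝ) (hA : A.PosSemidef)
    (c : (Fin m → ℝ) → ℝ)
    (h1 : Assumption1 u c)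
    (hp' : ∀ x, ∀ t : ℝ, 0 < t → HasDerivAt (fun r => u x r / r) (p' x t) t)
    (S : Fin n → Fin m → ℝ) (hS : ∀ i, S i ∈ stdSimplex ℝ (Fin m))
    (s : Fin m → ℝ) (hs : ∀ x, s x = ∑ i, S i x) (hspos : ∀ x, 0 < s x)
    (g : Fin n → Fin m → ℝ)
    (hg : ∀ i x, g i x = u x (s x) / s x + p' x (s x) * S i x - A.mulVec (S i) x) :
    (∑ i, ∑ x, (S i x - s x / n) * (g i x - (∑ y, g i y) / m) =
        ∑ x, p' x (s x) * ((∑ i, (S i x) ^ 2) - (s x) ^ 2 / n)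
          - ∑ i, dotProduct (fun y => S i y - s y / n)
              (A.mulVec (fun y => S i y - s y / n))) ∧
    (∑ i, ∑ x, (S i x - s x / n) * (g i x - (∑ y, g i y) / m) ≤ 0) ∧
    ((∀ i, S i = fun x => s x / n) →
      ∑ i, ∑ x, (S i x - s x / n) * (g i x - (∑ y, g i y) / m) = 0) ∧
    (A.PosDef →
      ∑ i, ∑ x, (S i x - s x / n) * (g i x - (∑ y, g i y) / m) = 0 →
      ∀ i, S i = fun x => s x / n) := by
  have hid := sum_sum_sub_div_card_mul_sub_eq hs (fun i => (hS i).2) A _ _ hg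
    fun i => (∑ y, g i y) / m
  rw [Fintype.card_fin] at hid
  have hp'_nonpos : ∀ x, p' x (s x) ≤ 0 := fun x =>
    (hp' x _ (hspos x)).nonpos_of_antitoneOn_of_mem_nhds
      ((h1.u_concave x).antitoneOn_div_self (h1.u_zero x)) (Ioi_mem_nhds (hspos x))
  have hvar : ∀ x, 0 ≤ ∑ i, S i x ^ 2 - s x ^ 2 / n := fun x =>
    sub_nonneg.2 (by simpa [hs] using sq_sum_div_card_le_sum_sq (S · x))
  have hdev : ∑ x, p' x (s x) * (∑ i, S i x ^ 2 - s x ^ 2 / n) ≤ 0 :=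
    sum_nonpos fun x _ => mul_nonpos_of_nonpos_of_nonneg (hp'_nonpos x) (hvar x)
  have hquad : ∀ i, 0 ≤ (fun y => S i y - s y / n) ⬝ᵥ (A *ᵥ fun y => S i y - s y / n) :=
    fun i => by simpa using hA.dotProduct_mulVec_nonneg fun y => S i y - s y / n
  have hquad_sum := sum_nonneg fun i (_ : i ∈ Finset.univ) => hquad i
  refine ⟨hid, by linarith, fun h => by simp [h], fun hpd h0 i => ?_⟩
  have hzero := (sum_eq_zero_iff_of_nonneg fun i _ => hquad i).1 (by linarith) i (mem_univ i)
  funext x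
  simpa [sub_eq_zero] using congrFun (hpd.eq_zero_of_dotProduct_mulVec_self_eq_zero hzero) x

/-- Under Assumptions 1 and 2 (quadratic cost `c(v) = ½ vᵀAv`
with `A` symmetric positive semidefinite), for a profile `S` whose aggregate
`s` has all coordinates positive and marginal payoffs
`g_{ix} = p_x(s_x) + p_x'(s_x)·s_{ix} − (A s_i)_x`, one has
`Σ_i Σ_x (s_{ix} − s_x/n)(g_{ix} − (1/m)Σ_y g_{iy})
  = Σ_x p_x'(s_x)(Σ_i s_{ix}² − s_x²/n) − Σ_i (s_i − s/n)ᵀA(s_i − s/n) ≤ 0`,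
with equality whenever `s_i = s/n` for all `i`, and—if `A` is positive
definite—only if `s_i = s/n` for all `i`. -/
theorem regularizer_derivative_nonpos (n m : ℕ) (hn : 2 ≤ n) (hm : 2 ≤ m)
    (u u' p' : Fin m → ℝ → ℝ)
    (A : Matrix (Fin m) (Fin m) ℝ) (hA : A.PosSemidef)
    (c : (Fin m → ℝ) → ℝ)
    (hc : ∀ v, c v = (1/2) * dotProduct v (A.mulVec v))
    (h1 : Assumption1 u c)
    (hu' : ∀ x, ∀ t : ℝ, 0 < t → HasDerivAt (u x) (u' x t) t)
    (hu'cont : ∀ x, ContinuousOn (u' x) (Ioi (0:ℝ)))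
    (hp' : ∀ x, ∀ t : ℝ, 0 < t → HasDerivAt (fun r => u x r / r) (p' x t) t)
    (S : Fin n → Fin m → ℝ) (hS : ∀ i, S i ∈ stdSimplex ℝ (Fin m))
    (s : Fin m → ℝ) (hs : ∀ x, s x = ∑ i, S i x) (hspos : ∀ x, 0 < s x)
    (g : Fin n → Fin m → ℝ)
    (hg : ∀ i x, g i x = u x (s x) / s x + p' x (s x) * S i x - A.mulVec (S i) x) :
    (∑ i, ∑ x, (S i x - s x / n) * (g i x - (∑ y, g i y) / m) =
        ∑ x, p' x (s x) * ((∑ i, (S i x) ^ 2) - (s x) ^ 2 / n)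
          - ∑ i, dotProduct (fun y => S i y - s y / n)
              (A.mulVec (fun y => S i y - s y / n))) ∧
    (∑ i, ∑ x, (S i x - s x / n) * (g i x - (∑ y, g i y) / m) ≤ 0) ∧
    ((∀ i, S i = fun x => s x / n) →
      ∑ i, ∑ x, (S i x - s x / n) * (g i x - (∑ y, g i y) / m) = 0) ∧
    (A.PosDef →
      ∑ i, ∑ x, (S i x - s x / n) * (g i x - (∑ y, g i y) / m) = 0 →
      ∀ i, S i = fun x => s x / n) :=
  regularizer_derivative_nonpos_general n m u p' A hA c h1 hp' S hS s hs hspos g hg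
end

section
/- Consider the game G with production functions u_x(t) = a_x·t^p, where a_1, …, a_m > 0 and p ∈ (0,1), and zero cost c ≡ 0. Let w ∈ Δ be defined by w_x = a_x^{1/(1−p)} / Σ_y a_y^{1/(1−p)}. Then the symmetric profile S* = (w, …, w) is a pure-strategy Nash equilibrium of G, and its aggregate strategy s* = n·w maximizes the total income Σ_i u_i(S) = Σ_x a_x·s_x^p over all profiles S ∈ Δ^n (where s = Σ_i s_i); that is, the Nash equilibrium is socially optimal. -/
open Set Finset

/-- Payoff in the power-production game with zero cost: a player with strategy
`v` facing opponent aggregate `w` receives `Σ_x a_x·(v_x + w_x)^{p−1}·v_x`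
(real powers; the term is `0` when `v_x + w_x = 0` since `0^{p−1} = 0`). -/
noncomputable def payPow {m : ℕ} (a : Fin m → ℝ) (p : ℝ)
    (w v : Fin m → ℝ) : ℝ :=
  ∑ x, a x * (v x + w x) ^ (p - 1) * v x

/-!
Write `a_x = λ·w_x^(1-p)` with `λ = (Σ_y a_y^(1/(1-p)))^(1-p)`. Then every sum in the statement
becomes `λ·Σ_x w_x·φ(v_x / w_x)` for a function `φ` of one variable: `φ r = r^p` for the total
income, and `φ r = r·(r + n - 1)^(p-1)` for a payoff against the opponents' aggregate `(n-1)·w`.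
Since the weights `w_x` sum to one, Jensen's inequality for the concave `r^p` bounds the income by
`λ·(Σ_x s_x)^p = λ·n^p`, the income of `n·w`. In the Nash part `φ` lies below its tangent line at
`r = 1`, and as `Σ_x v_x = Σ_x w_x` the linear term cancels, leaving `λ·φ 1`, the payoff of `w`.
-/

lemma mul_add_rpow_sub_one_le_tangent {p N r : ℝ} (hp0 : 0 < p) (hp1 : p < 1) (hN : 1 ≤ N)
    (hr : 0 ≤ r) :
    r * (r + (N - 1)) ^ (p - 1) ≤ N ^ (p - 1) + N ^ (p - 2) * (N - 1 + p) * (r - 1) := by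
  have hN0 : 0 < N := by linarith
  have hX : 0 < N ^ (p - 2) := Real.rpow_pos_of_pos hN0 _
  have hN1 : N ^ (p - 1) = N ^ (p - 2) * N := by
    rw [← Real.rpow_add_one hN0.ne']; ring_nf
  rcases hr.eq_or_lt with rfl | hr0
  · rw [hN1]; nlinarith
  set u := r + (N - 1) with hu_def
  have hu : 0 < u := by linarith
  have hNp : N ^ p = N ^ (p - 2) * N ^ 2 := by
    rw [← Real.rpow_natCast, ← Real.rpow_add hN0]; norm_num
  have hup : u ^ p = u ^ (p - 1) * u := by
    rw [← Real.rpow_add_one hu.ne']; ring_nf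
  -- the tangent line of `t ↦ t ^ p` at `N`, from Bernoulli's inequality
  have htangent : u ^ (p - 1) * u ≤ N ^ (p - 2) * N * (N + p * (u - N)) := by
    have h := rpow_one_add_le_one_add_mul_self (s := u / N - 1)
      (by linarith [div_nonneg hu.le hN0.le]) hp0.le hp1.le
    rw [add_sub_cancel, Real.div_rpow hu.le hN0.le, div_le_iff₀ (by positivity), hNp, hup] at h
    calc _ ≤ _ := h
      _ = _ := by field_simp
  -- multiplied by `u`, the gap in the goal is `N^(p-2)·(1-p)(N-1)(r-1)^2`
  have hgap : 0 ≤ N ^ (p - 2) * ((1 - p) * (N - 1) * (r - 1) ^ 2) := by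
    have : 0 ≤ (1 - p) * (N - 1) := mul_nonneg (by linarith) (by linarith)
    positivity
  rw [hN1]
  refine le_of_mul_le_mul_right ?_ hu
  nlinarith [mul_le_mul_of_nonneg_left htangent hr]

section Weights

variable {ι : Type*}

lemma ConcaveOn.sum_mul_map_div_le {s : Finset ι} {φ : ℝ → ℝ} (hφ : ConcaveOn ℝ (Ici 0) φ)
    {w v : ι → ℝ} (hw : ∀ i ∈ s, 0 < w i) (hw1 : ∑ i ∈ s, w i = 1) (hv : ∀ i ∈ s, 0 ≤ v i) :
    ∑ i ∈ s, w i * φ (v i / w i) ≤ φ (∑ i ∈ s, v i) := by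
  have hsum : ∑ i ∈ s, w i * (v i / w i) = ∑ i ∈ s, v i :=
    Finset.sum_congr rfl fun i hi => mul_div_cancel₀ _ (hw i hi).ne'
  simpa only [smul_eq_mul, hsum] using hφ.le_map_sum (fun i hi => (hw i hi).le) hw1
    (fun i hi => div_nonneg (hv i hi) (hw i hi).le)

lemma sum_mul_map_div_le_of_le_line {s : Finset ι} {φ : ℝ → ℝ} {b k : ℝ}
    (hφ : ∀ r, 0 ≤ r → φ r ≤ b + k * (r - 1))
    {w v : ι → ℝ} (hw : ∀ i ∈ s, 0 < w i) (hw1 : ∑ i ∈ s, w i = 1) (hv : ∀ i ∈ s, 0 ≤ v i)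
    (hv1 : ∑ i ∈ s, v i = 1) :
    ∑ i ∈ s, w i * φ (v i / w i) ≤ b := by
  calc ∑ i ∈ s, w i * φ (v i / w i)
      ≤ ∑ i ∈ s, (b * w i + k * (v i - w i)) := Finset.sum_le_sum fun i hi => by
        have hwi := hw i hi
        have hline : w i * (b + k * (v i / w i - 1)) = b * w i + k * (v i - w i) := by
          field_simp
        exact hline ▸ mul_le_mul_of_nonneg_left (hφ _ (div_nonneg (hv i hi) hwi.le)) hwi.le
    _ = b := by rw [Finset.sum_add_distrib, ← Finset.mul_sum, ← Finset.mul_sum,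
        Finset.sum_sub_distrib, hw1, hv1]; ring

variable [Fintype ι]

lemma pos_and_sum_eq_one_of_eq_div_sum [Nonempty ι] {b w : ι → ℝ} (hb : ∀ x, 0 < b x)
    (hw : ∀ x, w x = b x / ∑ y, b y) : (∀ x, 0 < w x) ∧ ∑ x, w x = 1 := by
  have hB : 0 < ∑ y, b y := Finset.sum_pos (fun y _ => hb y) Finset.univ_nonempty
  refine ⟨fun x => hw x ▸ div_pos (hb x) hB, ?_⟩
  simp_rw [hw, ← Finset.sum_div, div_self hB.ne']

end Weights

lemma rpow_one_sub_mul_rpow {p w s : ℝ} (hw : 0 < w) (hs : 0 ≤ s) :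
    w ^ (1 - p) * s ^ p = w * (s / w) ^ p := by
  rw [Real.div_rpow hs hw.le, Real.rpow_sub hw, Real.rpow_one]
  field_simp

lemma rpow_one_sub_mul_add_rpow_sub_one_mul {p w v c : ℝ} (hw : 0 < w) (hv : 0 ≤ v)
    (hc : 0 ≤ c) :
    w ^ (1 - p) * (v + c * w) ^ (p - 1) * v = w * (v / w * (v / w + c) ^ (p - 1)) := by
  have hvw : v + c * w = w * (v / w + c) := by field_simp
  have hcancel : w ^ (1 - p) * w ^ (p - 1) = 1 := by
    rw [← Real.rpow_add hw]; simp
  rw [hvw, Real.mul_rpow hw.le (by positivity)]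
  calc w ^ (1 - p) * (w ^ (p - 1) * (v / w + c) ^ (p - 1)) * v
      = (w ^ (1 - p) * w ^ (p - 1)) * (v / w + c) ^ (p - 1) * v := by ring
    _ = _ := by rw [hcancel]; field_simp

lemma eq_rpow_mul_rpow_of_eq_rpow_div_sum {ι : Type*} [Fintype ι] {p : ℝ} (hp : p < 1)
    {a w : ι → ℝ} (ha : ∀ x, 0 < a x)
    (hw : ∀ x, w x = a x ^ (1 / (1 - p)) / ∑ y, a y ^ (1 / (1 - p))) (x : ι) :
    a x = (∑ y, a y ^ (1 / (1 - p))) ^ (1 - p) * w x ^ (1 - p) := by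
  have hB : 0 < ∑ y, a y ^ (1 / (1 - p)) :=
    Finset.sum_pos (fun y _ => Real.rpow_pos_of_pos (ha y) _) ⟨x, Finset.mem_univ x⟩
  have hexp : 1 / (1 - p) * (1 - p) = 1 := by field_simp [(by linarith : (1 - p) ≠ 0)]
  rw [hw x, Real.div_rpow (Real.rpow_nonneg (ha x).le _) hB.le, ← Real.rpow_mul (ha x).le, hexp,
    Real.rpow_one, mul_div_cancel₀ _ (Real.rpow_pos_of_pos hB _).ne']

section Rescaling

variable {p lam : ℝ}

lemma sum_mul_rpow_eq_mul_sum {ι : Type*} [Fintype ι] {a w s : ι → ℝ}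
    (ha : ∀ x, a x = lam * w x ^ (1 - p)) (hw : ∀ x, 0 < w x) (hs : ∀ x, 0 ≤ s x) :
    ∑ x, a x * s x ^ p = lam * ∑ x, w x * (s x / w x) ^ p := by
  rw [Finset.mul_sum]
  refine Finset.sum_congr rfl fun x _ => ?_
  rw [ha, mul_assoc, rpow_one_sub_mul_rpow (hw x) (hs x)]

lemma payPow_eq_mul_sum {m : ℕ} {a w v : Fin m → ℝ} {c : ℝ}
    (ha : ∀ x, a x = lam * w x ^ (1 - p)) (hw : ∀ x, 0 < w x) (hv : ∀ x, 0 ≤ v x) (hc : 0 ≤ c) :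
    payPow a p (fun x => c * w x) v =
      lam * ∑ x, w x * (v x / w x * (v x / w x + c) ^ (p - 1)) := by
  rw [payPow, Finset.mul_sum]
  refine Finset.sum_congr rfl fun x _ => ?_
  rw [ha, ← rpow_one_sub_mul_add_rpow_sub_one_mul (hw x) (hv x) hc]
  ring

end Rescaling

/-- In the game with production functions `u_x(t) = a_x t^p`
(`a_x > 0`, `p ∈ (0,1)`) and zero cost, the symmetric profile where every
player plays `w`, `w_x = a_x^{1/(1−p)} / Σ_y a_y^{1/(1−p)}`, is a pure-strategy
Nash equilibrium, and its aggregate `n·w` maximizes the total income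
`Σ_x a_x·s_x^p` over all profiles in `Δ^n`: the Nash equilibrium is socially
optimal. -/
theorem power_game_NE_socially_optimal (n m : ℕ) (hn : 2 ≤ n) (hm : 2 ≤ m)
    (a : Fin m → ℝ) (ha : ∀ x, 0 < a x)
    (p : ℝ) (hp : p ∈ Ioo (0:ℝ) 1)
    (w : Fin m → ℝ)
    (hw : ∀ x, w x = a x ^ (1/(1-p)) / ∑ y, a y ^ (1/(1-p))) :
    (w ∈ stdSimplex ℝ (Fin m) ∧
      ∀ _i : Fin n, ∀ v ∈ stdSimplex ℝ (Fin m),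
        payPow a p (fun x => (∑ _j : Fin n, w x) - w x) v ≤
          payPow a p (fun x => (∑ _j : Fin n, w x) - w x) w) ∧
    ∀ S : Fin n → Fin m → ℝ, (∀ i, S i ∈ stdSimplex ℝ (Fin m)) →
      ∑ x, a x * (∑ i, S i x) ^ p ≤ ∑ x, a x * ((n : ℝ) * w x) ^ p := by
  obtain ⟨hp0, hp1⟩ := hp
  have : Nonempty (Fin m) := ⟨⟨0, by omega⟩⟩
  obtain ⟨hwpos, hw1⟩ :=
    pos_and_sum_eq_one_of_eq_div_sum (fun x => Real.rpow_pos_of_pos (ha x) _) hw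
  have ha' := eq_rpow_mul_rpow_of_eq_rpow_div_sum hp1 ha hw
  have hlam : 0 ≤ (∑ y, a y ^ (1 / (1 - p))) ^ (1 - p) :=
    Real.rpow_nonneg (Finset.sum_nonneg fun y _ => (Real.rpow_pos_of_pos (ha y) _).le) _
  have hN : (1 : ℝ) ≤ n := by exact_mod_cast (by omega : 1 ≤ n)
  refine ⟨⟨⟨fun x => (hwpos x).le, hw1⟩, fun _ v hv => ?_⟩, fun S hS => ?_⟩
  · have hopp : (fun x => (∑ _j : Fin n, w x) - w x) = fun x => ((n : ℝ) - 1) * w x := by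
      funext x; simp only [Finset.sum_const, Finset.card_univ, Fintype.card_fin, nsmul_eq_mul]; ring
    rw [hopp, payPow_eq_mul_sum ha' hwpos hv.1 (by linarith),
      payPow_eq_mul_sum ha' hwpos (fun x => (hwpos x).le) (by linarith)]
    refine mul_le_mul_of_nonneg_left ?_ hlam
    calc _ ≤ (n : ℝ) ^ (p - 1) := sum_mul_map_div_le_of_le_line
          (fun r hr => mul_add_rpow_sub_one_le_tangent hp0 hp1 hN hr)
          (fun x _ => hwpos x) hw1 (fun x _ => hv.1 x) hv.2
      _ = _ := by simp [div_self (hwpos _).ne', ← Finset.sum_mul, hw1]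
  · have hs : ∀ x, 0 ≤ ∑ i, S i x := fun x => Finset.sum_nonneg fun i _ => (hS i).1 x
    have hs1 : ∑ x, ∑ i, S i x = n := by
      rw [Finset.sum_comm]; simp [fun i => (hS i).2]
    rw [sum_mul_rpow_eq_mul_sum ha' hwpos hs,
      sum_mul_rpow_eq_mul_sum ha' hwpos fun x => by have := hwpos x; positivity]
    refine mul_le_mul_of_nonneg_left ?_ hlam
    calc _ ≤ (∑ x, ∑ i, S i x) ^ p := (Real.concaveOn_rpow hp0.le hp1.le).sum_mul_map_div_le
          (fun x _ => hwpos x) hw1 (fun x _ => hs x)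
      _ = _ := by simp [hs1, mul_div_cancel_right₀ _ (hwpos _).ne', ← Finset.sum_mul, hw1]
end
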